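/- arXiv:2107.07750 — 4 statements merged into one kernel-verified Lean document; each statement's English description precedes it below -/
import Mathlib

section
/- Let X be a nonempty set, m ∈ ℕ, (A_j)_{j=1,…,m} a partition of X, and for each j let k_j be a kernel on A_j and λ_j > 0. Define k : X × X → ℝ by k(x, y) := Σ_{j=1}^m λ_j^{−1} 𝟙_{A_j}(x) k_j(x, y) 𝟙_{A_j}(y). Then k is a kernel on X, and its RKHS is the space H of functions f : X → ℝ with f|_{A_j} ∈ H_j for all j, equipped with the inner product ⟨f, g⟩_H = Σ_{j=1}^m λ_j ⟨f|_{A_j}, g|_{A_j}⟩_{H_j}, where H_j is the RKHS of k_j. In particular, for every f ∈ H and x ∈ X one has ⟨f, k(x,·)⟩_H = f(x). -/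
/-!
The `j`-th summand `λ_j⁻¹ 𝟙_{A_j}(x) k_j(x,y) 𝟙_{A_j}(y)` is, by the reproducing property of `H_j`,
the inner product of the features `λ_j^{-1/2} 𝟙_{A_j}(x) K_j x` and `λ_j^{-1/2} 𝟙_{A_j}(y) K_j y`,
so `k` is the kernel of the `ℓ²`-sum of the `H_j`. Since the cells are disjoint, for `x ∈ A_{j₀}`
only the `j₀`-th summand of any of the sums involved survives, and the reproducing property of
`k` reduces to that of `H_{j₀}`.
-/

open scoped RealInnerProductSpace

open Function

/-- A witness that `k` is a kernel: a real Hilbert space together with a feature map `Φ`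
with `k x y = ⟪Φ x, Φ y⟫`. -/
structure KernelWitness {X : Type} (k : X → X → ℝ) : Type 1 where
  H : Type
  [ng : NormedAddCommGroup H]
  [ip : InnerProductSpace ℝ H]
  [cs : CompleteSpace H]
  Φ : X → H
  feat : ∀ x y, k x y = ⟪Φ x, Φ y⟫

noncomputable def KernelWitness.sumInner {X ι : Type} [Fintype ι] {E : ι → Type}
    [∀ i, NormedAddCommGroup (E i)] [∀ i, InnerProductSpace ℝ (E i)]
    [∀ i, CompleteSpace (E i)]
    (Φ : ∀ i, X → E i) : KernelWitness (fun x y => ∑ i, ⟪Φ i x, Φ i y⟫) where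
  H := PiLp 2 E
  Φ x := WithLp.toLp 2 fun i => Φ i x
  feat x y :=
    (PiLp.inner_apply (WithLp.toLp 2 fun i => Φ i x) (WithLp.toLp 2 fun i => Φ i y)).symm

theorem real_inner_sqrt_smul_sqrt_smul {E : Type} [NormedAddCommGroup E]
    [InnerProductSpace ℝ E]
    {c : ℝ} (hc : 0 ≤ c) (a b : E) : ⟪√c • a, √c • b⟫ = c * ⟪a, b⟫ := by
  rw [real_inner_smul_left, real_inner_smul_right, ← mul_assoc, Real.mul_self_sqrt hc]

theorem sum_eq_of_mem_of_pairwise_disjoint {ι X M : Type} [Fintype ι] [AddCommMonoid M]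
    {P : ι → Set X} (hP : Pairwise (Disjoint on P)) {x : X} {j₀ : ι} (hx : x ∈ P j₀)
    (f : ι → M) (hf : ∀ j, x ∉ P j → f j = 0) : ∑ j, f j = f j₀ :=
  Finset.sum_eq_single j₀
    (fun j _ hj => hf j fun hxj => Set.disjoint_left.1 (hP hj) hxj hx)
    (fun h => absurd (Finset.mem_univ j₀) h)

theorem indicator_indicator_ev_eq_inner {X E : Type} [NormedAddCommGroup E]
    [InnerProductSpace ℝ E] {s : Set X} {ev : E → X → ℝ} {K : X → E}
    (hrepro : ∀ (f : E) (x : X), x ∈ s → ev f x = ⟪f, K x⟫) (x y : X) :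
    s.indicator (fun y' => s.indicator (fun x' => ev (K y') x') x) y
      = ⟪s.indicator K x, s.indicator K y⟫ := by
  by_cases hx : x ∈ s
  · by_cases hy : y ∈ s
    · simp only [Set.indicator_of_mem hx, Set.indicator_of_mem hy, hrepro _ x hx,
        real_inner_comm]
    · simp [Set.indicator_of_notMem hy]
  · simp [Set.indicator_of_notMem hx]

theorem localized_kernel_general {X : Type} (m : ℕ)
    (P : Fin m → Set X) (hP : ∀ x : X, ∃! j, x ∈ P j)
    (lam : Fin m → ℝ) (hlam : ∀ j, 0 < lam j)
    (H : Fin m → Type) [∀ j, NormedAddCommGroup (H j)] [∀ j, InnerProductSpace ℝ (H j)]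
    [∀ j, CompleteSpace (H j)]
    (ev : ∀ j, H j → X → ℝ)
    (K : ∀ j, X → H j)
    (hrepro : ∀ (j) (f : H j) (x : X), x ∈ P j → ev j f x = ⟪f, K j x⟫)
    (k : X → X → ℝ)
    (hk : k = fun x y => ∑ j, (lam j)⁻¹ *
      (P j).indicator (fun y' => (P j).indicator (fun x' => ev j (K j y') x') x) y) :
    -- `k` is a kernel on `X`
    Nonempty (KernelWitness k) ∧
    -- `k(x,·)` restricted to each cell `A_j` belongs to `H_j`
    (∀ (x : X) (j : Fin m), ∃ g : H j, ∀ y ∈ P j, k x y = ev j g y) ∧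
    -- reproducing property: for `f` with `f|_{A_j} = ev j (g j)`,
    -- `⟨f, k(x,·)⟩_H = ∑_j λ_j ⟨g_j, (k(x,·))|_{A_j}⟩_{H_j} = f(x)`
    (∀ (g : ∀ j, H j) (x : X) (j₀ : Fin m), x ∈ P j₀ →
      ∑ j, lam j * ⟪g j, (P j).indicator (fun x' => (lam j)⁻¹ • K j x') x⟫
        = ev j₀ (g j₀) x) := by
  have hdisj : Pairwise (Disjoint on P) := fun i j hij =>
    Set.disjoint_left.2 fun x hi hj => hij ((hP x).unique hi hj)
  have hk_inner : ∀ x y,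
      k x y = ∑ j, (lam j)⁻¹ * ⟪(P j).indicator (K j) x, (P j).indicator (K j) y⟫ :=
    fun x y => by simp only [hk, indicator_indicator_ev_eq_inner (hrepro _)]
  refine ⟨?_, fun x j => ?_, fun g x j₀ hx => ?_⟩
  · have hfeat : k = fun x y => ∑ j,
        ⟪√(lam j)⁻¹ • (P j).indicator (K j) x, √(lam j)⁻¹ • (P j).indicator (K j) y⟫ := by
      ext x y
      simp only [hk_inner, real_inner_sqrt_smul_sqrt_smul (inv_nonneg.2 (hlam _).le)]
    exact ⟨hfeat ▸ KernelWitness.sumInner _⟩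
  · refine ⟨(lam j)⁻¹ • (P j).indicator (K j) x, fun y hy => ?_⟩
    rw [hk_inner, sum_eq_of_mem_of_pairwise_disjoint hdisj hy _
        fun i hyi => by rw [Set.indicator_of_notMem hyi, inner_zero_right, mul_zero],
      hrepro j _ y hy, Set.indicator_of_mem hy, real_inner_smul_left]
  · rw [sum_eq_of_mem_of_pairwise_disjoint hdisj hx _
        fun i hxi => by rw [Set.indicator_of_notMem hxi, inner_zero_right, mul_zero],
      Set.indicator_of_mem hx, real_inner_smul_right, hrepro j₀ _ x hx, ← mul_assoc,
      mul_inv_cancel₀ (hlam j₀).ne', one_mul]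

/-- The localized kernel `k(x,y) = ∑_j λ_j⁻¹ 𝟙_{A_j}(x) k_j(x,y) 𝟙_{A_j}(y)` built from a
partition `(A_j)` of `X` and RKHSs `H_j` on the cells is a kernel; the function `k(x,·)`
restricted to each cell is represented in `H_j`; and the reproducing property
`⟨f, k(x,·)⟩_H = f(x)` holds for the inner product `⟨f, g⟩_H = ∑_j λ_j ⟨f|_{A_j}, g|_{A_j}⟩`.
Here the RKHS `H_j` of `k_j` is given by a Hilbert space `H j` of functions on `A_j` via an
injective linear evaluation `ev j` with reproducing elements `K j x` for `x ∈ A_j`, so that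
`k_j x y = ev j (K j y) x`. -/
theorem localized_kernel {X : Type} [Nonempty X] (m : ℕ)
    (P : Fin m → Set X) (hP : ∀ x : X, ∃! j, x ∈ P j)
    (lam : Fin m → ℝ) (hlam : ∀ j, 0 < lam j)
    (H : Fin m → Type) [∀ j, NormedAddCommGroup (H j)] [∀ j, InnerProductSpace ℝ (H j)]
    [∀ j, CompleteSpace (H j)]
    (ev : ∀ j, H j → X → ℝ) (hlin : ∀ j, IsLinearMap ℝ (ev j))
    (hinj : ∀ j, Function.Injective (ev j))
    (K : ∀ j, X → H j)
    (hrepro : ∀ (j) (f : H j) (x : X), x ∈ P j → ev j f x = ⟪f, K j x⟫)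
    (k : X → X → ℝ)
    (hk : k = fun x y => ∑ j, (lam j)⁻¹ *
      (P j).indicator (fun y' => (P j).indicator (fun x' => ev j (K j y') x') x) y) :
    -- `k` is a kernel on `X`
    Nonempty (KernelWitness k) ∧
    -- `k(x,·)` restricted to each cell `A_j` belongs to `H_j`
    (∀ (x : X) (j : Fin m), ∃ g : H j, ∀ y ∈ P j, k x y = ev j g y) ∧
    -- reproducing property: for `f` with `f|_{A_j} = ev j (g j)`,
    -- `⟨f, k(x,·)⟩_H = ∑_j λ_j ⟨g_j, (k(x,·))|_{A_j}⟩_{H_j} = f(x)`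
    (∀ (g : ∀ j, H j) (x : X) (j₀ : Fin m), x ∈ P j₀ →
      ∑ j, lam j * ⟪g j, (P j).indicator (fun x' => (lam j)⁻¹ • K j x') x⟫
        = ev j₀ (g j₀) x) :=
  localized_kernel_general m P hP lam hlam H ev K hrepro k hk
end

section
/- Let (X, dist) be a finite metric space V = {v_1,…,v_n} ⊆ ℝ^d with Euclidean distance, and let k ≤ n. The farthest first traversal algorithm initializes C = {v_1} and repeatedly adds a point of V \ C at maximum distance to C until |C| = k. Then the resulting set C is a 2-approximation of the metric k-center problem: max_{v∈V} min_{c∈C} ‖v − c‖ ≤ 2 · min_{C'⊆V, |C'|=k} max_{v∈V} min_{c∈C'} ‖v − c‖. -/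
/-! If some point `p` were farther than `2R` from all of `c 0, …, c (k-1)`, where `R` is the
radius of `C'`, then the farthest-first rule makes `c 0, …, c (k-1), p` pairwise farther than
`2R` apart: each `c (m+1)` is at least as far from the earlier centers as `p` is. These `k + 1`
points each lie within `R` of one of the `k` points of `C'`, so two of them share a nearest
center and are within `2R` of each other. -/

open Finset

section

variable {α : Type*} [PseudoMetricSpace α]

theorem Fintype.card_le_card_of_pairwise_two_mul_lt_dist {ι : Type*} [Fintype ι]
    {C : Finset α} {y : ι → α} {r : ℝ} (hnear : ∀ i, ∃ z ∈ C, dist (y i) z ≤ r)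
    (hsep : Pairwise fun i j => 2 * r < dist (y i) (y j)) : Fintype.card ι ≤ C.card := by
  choose g hgC hg using hnear
  have hinj : Function.Injective g := by
    intro i j hij
    by_contra hne
    have := calc
      dist (y i) (y j) ≤ dist (y i) (g i) + dist (g j) (y j) := hij ▸ dist_triangle _ _ _
      _ ≤ r + r := add_le_add (hg i) (dist_comm (y j) (g j) ▸ hg j)
    linarith [hsep hne]
  simpa only [card_univ] using card_le_card_of_injOn g (s := univ) (fun i _ => hgC i) hinj.injOn

variable (c : ℕ → α) (p : α) {k : ℕ} {r : ℝ}

theorem lt_dist_of_farthest_first (hr : 0 ≤ r)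
    (hfar : ∀ m, m + 1 < k → (∀ j ≤ m, p ≠ c j) →
      (range (m + 1)).inf' nonempty_range_add_one (fun j => dist p (c j))
        ≤ (range (m + 1)).inf' nonempty_range_add_one (fun j => dist (c (m + 1)) (c j)))
    (hp : ∀ j < k, r < dist p (c j)) {i i' : ℕ} (hii' : i < i') (hi' : i' < k) :
    r < dist (c i') (c i) := by
  obtain ⟨m, rfl⟩ : ∃ m, i' = m + 1 := ⟨i' - 1, by omega⟩
  have hp_ne : ∀ j ≤ m, p ≠ c j := fun j hj h => by
    have := hp j (by omega)
    rw [h, dist_self] at this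
    linarith
  have hp_far : r < (range (m + 1)).inf' nonempty_range_add_one (fun j => dist p (c j)) :=
    (lt_inf'_iff _).mpr fun j hj => hp j (by have := mem_range.mp hj; omega)
  calc r < _ := hp_far
    _ ≤ _ := hfar m hi' hp_ne
    _ ≤ dist (c (m + 1)) (c i) := inf'_le _ (mem_range.mpr hii')

theorem pairwise_lt_dist_of_farthest_first (hr : 0 ≤ r)
    (hfar : ∀ m, m + 1 < k → (∀ j ≤ m, p ≠ c j) →
      (range (m + 1)).inf' nonempty_range_add_one (fun j => dist p (c j))
        ≤ (range (m + 1)).inf' nonempty_range_add_one (fun j => dist (c (m + 1)) (c j)))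
    (hp : ∀ j < k, r < dist p (c j)) :
    Pairwise fun a b : Option (Fin k) =>
      r < dist (a.elim p fun i => c i) (b.elim p fun i => c i) := by
  rintro (_ | i) (_ | j) hne
  · exact absurd rfl hne
  · exact hp j j.2
  · exact dist_comm p (c i) ▸ hp i i.2
  · have hij : (i : ℕ) ≠ j := fun h => hne (congrArg some (Fin.ext h))
    rcases hij.lt_or_gt with h | h
    · exact dist_comm (c j) (c i) ▸ lt_dist_of_farthest_first c p hr hfar hp h j.2
    · exact lt_dist_of_farthest_first c p hr hfar hp h i.2

end

theorem fft_two_approximation_general {d n k : ℕ} (hn : 0 < n) (hk : 0 < k)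
    (x : Fin n → EuclideanSpace ℝ (Fin d))
    (c : ℕ → EuclideanSpace ℝ (Fin d))
    (hc0 : c 0 = x ⟨0, hn⟩)
    (hmem : ∀ i, i + 1 < k →
      (∃ j : Fin n, c (i + 1) = x j) ∧ ∀ j ≤ i, c (i + 1) ≠ c j)
    (hfar : ∀ i, i + 1 < k → ∀ j : Fin n, (∀ j' ≤ i, x j ≠ c j') →
      (Finset.range (i + 1)).inf' (Finset.nonempty_range_iff.mpr (Nat.succ_ne_zero i))
          (fun j' => dist (x j) (c j'))
        ≤ (Finset.range (i + 1)).inf' (Finset.nonempty_range_iff.mpr (Nat.succ_ne_zero i))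
          (fun j' => dist (c (i + 1)) (c j')))
    (C' : Finset (EuclideanSpace ℝ (Fin d)))
    (hC'card : C'.card = k) :
    (Finset.univ.sup' (Finset.univ_nonempty_iff.mpr ⟨⟨0, hn⟩⟩)
        fun j : Fin n => (Finset.range k).inf' (Finset.nonempty_range_iff.mpr hk.ne')
          fun j' => dist (x j) (c j'))
      ≤ 2 * Finset.univ.sup' (Finset.univ_nonempty_iff.mpr ⟨⟨0, hn⟩⟩)
        (fun j : Fin n => C'.inf' (Finset.card_pos.mp (hC'card ▸ hk))
          fun y => dist (x j) y) := by
  set R := univ.sup' _ fun j : Fin n => C'.inf' _ fun y => dist (x j) y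
  have hnear : ∀ j, ∃ z ∈ C', dist (x j) z ≤ R := fun j => by
    obtain ⟨z, hz, hmin⟩ := exists_mem_eq_inf' (card_pos.mp (hC'card ▸ hk)) (dist (x j))
    exact ⟨z, hz, hmin ▸ le_sup' (fun j : Fin n => C'.inf' _ fun y => dist (x j) y) (mem_univ j)⟩
  have hR : 0 ≤ 2 * R := by
    obtain ⟨z, _, hz⟩ := hnear ⟨0, hn⟩
    linarith [dist_nonneg.trans hz]
  refine sup'_le _ _ fun j₀ _ => not_lt.mp fun hfar_j₀ => ?_
  have hp : ∀ j < k, 2 * R < dist (x j₀) (c j) :=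
    fun j hj => hfar_j₀.trans_le (inf'_le _ (mem_range.mpr hj))
  have hc_mem : ∀ i < k, ∃ j, c i = x j
    | 0, _ => ⟨_, hc0⟩
    | i + 1, hi => (hmem i hi).1
  have hsep := pairwise_lt_dist_of_farthest_first c (x j₀) hR (hfar · · j₀) hp
  have hnear_pts : ∀ a : Option (Fin k), ∃ z ∈ C', dist (a.elim (x j₀) fun i => c i) z ≤ R
    | none => hnear j₀
    | some i => by
      obtain ⟨j, hj⟩ := hc_mem i i.2
      simpa only [Option.elim_some, hj] using hnear j
  have hcard := Fintype.card_le_card_of_pairwise_two_mul_lt_dist hnear_pts hsep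
  simp [hC'card] at hcard

/-- The farthest first traversal produces a 2-approximation of the metric `k`-center problem:
if `c 0 = v 1` and each subsequent center `c (i+1)` is a point of `V \ {c 0, …, c i}` at maximum
distance to the already chosen centers, then for every `C' ⊆ V` with `|C'| = k` we have
`max_{v ∈ V} min_{c ∈ C} ‖v - c‖ ≤ 2 · max_{v ∈ V} min_{c' ∈ C'} ‖v - c'‖`. -/
theorem fft_two_approximation {d n k : ℕ} (hn : 0 < n) (hk : 0 < k) (hkn : k ≤ n)
    (x : Fin n → EuclideanSpace ℝ (Fin d))
    (c : ℕ → EuclideanSpace ℝ (Fin d))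
    (hc0 : c 0 = x ⟨0, hn⟩)
    (hmem : ∀ i, i + 1 < k →
      (∃ j : Fin n, c (i + 1) = x j) ∧ ∀ j ≤ i, c (i + 1) ≠ c j)
    (hfar : ∀ i, i + 1 < k → ∀ j : Fin n, (∀ j' ≤ i, x j ≠ c j') →
      (Finset.range (i + 1)).inf' (Finset.nonempty_range_iff.mpr (Nat.succ_ne_zero i))
          (fun j' => dist (x j) (c j'))
        ≤ (Finset.range (i + 1)).inf' (Finset.nonempty_range_iff.mpr (Nat.succ_ne_zero i))
          (fun j' => dist (c (i + 1)) (c j')))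
    (C' : Finset (EuclideanSpace ℝ (Fin d)))
    (hC'sub : ∀ y ∈ C', ∃ j : Fin n, y = x j)
    (hC'card : C'.card = k) :
    (Finset.univ.sup' (Finset.univ_nonempty_iff.mpr ⟨⟨0, hn⟩⟩)
        fun j : Fin n => (Finset.range k).inf' (Finset.nonempty_range_iff.mpr hk.ne')
          fun j' => dist (x j) (c j'))
      ≤ 2 * Finset.univ.sup' (Finset.univ_nonempty_iff.mpr ⟨⟨0, hn⟩⟩)
        (fun j : Fin n => C'.inf' (Finset.card_pos.mp (hC'card ▸ hk))
          fun y => dist (x j) y) :=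
  fft_two_approximation_general hn hk x c hc0 hmem hfar C' hC'card
end

section
/- Let μ be a probability measure on ℝ^d with support S, and assume there exist constants C_μ ≥ 1 and δ > 0 such that μ(B_r(x)) ≥ C_μ^{−1} r^δ for all x ∈ S and all 0 < r ≤ diam S. Let m ∈ ℕ and let ε_m(S) denote the m-th entropy number of S. Then for all τ with ε_m(S) < τ ≤ ε_m(S) + diam S, the probability under μ^n that an i.i.d. sample x_1,…,x_n satisfies sup_{x∈S} min_{i≤n} ‖x_i − x‖ > τ is at most m·exp(−C_μ^{−1}(τ − ε_m(S))^δ n). -/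
open Metric MeasureTheory

/-- The `m`-th entropy number of a set `S ⊆ ℝ^d`: the infimum over all `ε > 0` such that
there are `m` points of `S` whose closed `ε`-balls cover `S`. -/
noncomputable def entropyNumber {d : ℕ} (S : Set (EuclideanSpace ℝ (Fin d))) (m : ℕ) : ℝ :=
  sInf {ε : ℝ | 0 < ε ∧ ∃ x : Fin m → EuclideanSpace ℝ (Fin d),
    (∀ j, x j ∈ S) ∧ S ⊆ ⋃ j, closedBall (x j) ε}

/-- The (topological) support of a measure `μ` on `ℝ^d`: the set of points all of whose
neighborhoods have positive measure. -/
def measureSupport {d : ℕ} (μ : Measure (EuclideanSpace ℝ (Fin d))) :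
    Set (EuclideanSpace ℝ (Fin d)) :=
  {x | ∀ r : ℝ, 0 < r → 0 < μ (ball x r)}

/-!
Fix an `η`-net `x₁, …, x_m ⊆ S` with `η` slightly above `ε_m(S)` and put `ρ = τ - η`. If some
`s ∈ S` is at distance `> τ` from every sample point, then `s` lies in a ball `B_η(x_j)`, so by
the triangle inequality no sample point lies in `B_ρ(x_j)`. For a fixed `j` this has probability
`(1 - μ(B_ρ(x_j)))ⁿ ≤ (1 - C_μ⁻¹ ρ^δ)ⁿ ≤ exp(-C_μ⁻¹ ρ^δ n)`, and a union bound over `j` gives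
the estimate with `η` in place of `ε_m(S)`. Letting `η ↓ ε_m(S)` finishes the proof.
-/

lemma exists_cover_of_entropyNumber_lt {d m : ℕ} {S : Set (EuclideanSpace ℝ (Fin d))}
    (hm : 0 < m) (hne : S.Nonempty) (hb : Bornology.IsBounded S) {η : ℝ}
    (hη : entropyNumber S m < η) :
    ∃ x : Fin m → EuclideanSpace ℝ (Fin d), (∀ j, x j ∈ S) ∧ S ⊆ ⋃ j, closedBall (x j) η := by
  obtain ⟨s, hs⟩ := hne
  have hdiam_mem : diam S + 1 ∈ {ε : ℝ | 0 < ε ∧ ∃ x : Fin m → EuclideanSpace ℝ (Fin d),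
      (∀ j, x j ∈ S) ∧ S ⊆ ⋃ j, closedBall (x j) ε} :=
    ⟨by positivity, fun _ => s, fun _ => hs, fun y hy => Set.mem_iUnion.2
      ⟨⟨0, hm⟩, mem_closedBall.2 ((dist_le_diam_of_mem hb hy hs).trans (by linarith))⟩⟩
  obtain ⟨η', ⟨-, x, hxS, hcov⟩, hη'⟩ := exists_lt_of_csInf_lt ⟨_, hdiam_mem⟩ hη
  exact ⟨x, hxS, hcov.trans (Set.iUnion_mono fun j => closedBall_subset_closedBall hη'.le)⟩

lemma ENNReal.one_sub_ofReal_pow_le_exp (a : ℝ) (n : ℕ) :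
    (1 - ENNReal.ofReal a) ^ n ≤ ENNReal.ofReal (Real.exp (-(a * n))) := by
  have h_one_sub : 1 - ENNReal.ofReal a ≤ ENNReal.ofReal (Real.exp (-a)) :=
    calc 1 - ENNReal.ofReal a
        ≤ ENNReal.ofReal (1 - a) := by
          rw [tsub_le_iff_right, ← ENNReal.ofReal_one]
          simpa using ENNReal.ofReal_add_le (p := 1 - a) (q := a)
      _ ≤ ENNReal.ofReal (Real.exp (-a)) :=
          ENNReal.ofReal_le_ofReal (by linarith [Real.add_one_le_exp (-a)])
  calc (1 - ENNReal.ofReal a) ^ n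
      ≤ ENNReal.ofReal (Real.exp (-a)) ^ n := pow_le_pow_left' h_one_sub n
    _ = ENNReal.ofReal (Real.exp (-(a * n))) := by
        rw [← ENNReal.ofReal_pow (Real.exp_pos _).le, ← Real.exp_nat_mul]
        ring_nf

lemma measure_pi_compl_le_exp {ι α : Type*} [Fintype ι] [MeasurableSpace α] (μ : Measure α)
    [IsProbabilityMeasure μ] {B : Set α} (hB : MeasurableSet B) {a : ℝ}
    (ha : ENNReal.ofReal a ≤ μ B) :
    Measure.pi (fun _ : ι => μ) (Set.univ.pi fun _ => Bᶜ)
      ≤ ENNReal.ofReal (Real.exp (-(a * Fintype.card ι))) :=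
  calc Measure.pi (fun _ : ι => μ) (Set.univ.pi fun _ => Bᶜ)
      = (1 - μ B) ^ Fintype.card ι := by
        rw [Measure.pi_pi, prob_compl_eq_one_sub hB, Finset.prod_const, Finset.card_univ]
    _ ≤ (1 - ENNReal.ofReal a) ^ Fintype.card ι := by gcongr
    _ ≤ _ := ENNReal.one_sub_ofReal_pow_le_exp a _

section FarFromSample

variable {ι κ α : Type*} [PseudoMetricSpace α]

lemma setOf_exists_far_subset_iUnion_pi {S : Set α} {x : κ → α} {η τ : ℝ}
    (hcov : S ⊆ ⋃ j, closedBall (x j) η) :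
    {ω : ι → α | ∃ s ∈ S, ∀ i, τ < dist (ω i) s}
      ⊆ ⋃ j, Set.univ.pi fun _ => (closedBall (x j) (τ - η))ᶜ := by
  rintro ω ⟨s, hsS, hfar⟩
  obtain ⟨j, hj⟩ := Set.mem_iUnion.1 (hcov hsS)
  refine Set.mem_iUnion.2 ⟨j, fun i _ => ?_⟩
  rw [Set.mem_compl_iff, mem_closedBall, not_le]
  linarith [hfar i, mem_closedBall.1 hj, dist_triangle_right (ω i) s (x j)]

variable [Fintype ι] [Fintype κ] [MeasurableSpace α] [OpensMeasurableSpace α]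

lemma measure_exists_far_from_sample_le (μ : Measure α) [IsProbabilityMeasure μ]
    {S : Set α} {x : κ → α} {η τ a : ℝ} (hcov : S ⊆ ⋃ j, closedBall (x j) η)
    (hlow : ∀ j, ENNReal.ofReal a ≤ μ (closedBall (x j) (τ - η))) :
    Measure.pi (fun _ : ι => μ) {ω : ι → α | ∃ s ∈ S, ∀ i, τ < dist (ω i) s}
      ≤ ENNReal.ofReal (Fintype.card κ * Real.exp (-(a * Fintype.card ι))) :=
  calc Measure.pi (fun _ : ι => μ) {ω : ι → α | ∃ s ∈ S, ∀ i, τ < dist (ω i) s}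
      ≤ ∑ j, Measure.pi (fun _ : ι => μ) (Set.univ.pi fun _ => (closedBall (x j) (τ - η))ᶜ) :=
        (measure_mono (setOf_exists_far_subset_iUnion_pi hcov)).trans
          (measure_iUnion_fintype_le _ _)
    _ ≤ ∑ _j : κ, ENNReal.ofReal (Real.exp (-(a * Fintype.card ι))) :=
        Finset.sum_le_sum fun j _ => measure_pi_compl_le_exp μ measurableSet_closedBall (hlow j)
    _ = ENNReal.ofReal (Fintype.card κ * Real.exp (-(a * Fintype.card ι))) := by
        rw [Finset.sum_const, Finset.card_univ, nsmul_eq_mul, ENNReal.ofReal_mul (by positivity),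
          ENNReal.ofReal_natCast]

end FarFromSample

lemma le_of_forall_Ioo_le_of_continuousWithinAt {α : Type*} [LinearOrder α]
    [TopologicalSpace α] [OrderTopology α] {f : ℝ → α} {c : α} {ε τ : ℝ} (hετ : ε < τ)
    (h : ∀ η ∈ Set.Ioo ε τ, c ≤ f η) (hf : ContinuousWithinAt f (Set.Ioi ε) ε) : c ≤ f ε :=
  ge_of_tendsto hf (Filter.mem_of_superset (Ioo_mem_nhdsGT hετ) h)

attribute [local fun_prop] ENNReal.continuous_ofReal

theorem covering_by_sample_general {d : ℕ} (μ : Measure (EuclideanSpace ℝ (Fin d)))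
    [IsProbabilityMeasure μ]
    (S : Set (EuclideanSpace ℝ (Fin d)))
    (Cμ δ : ℝ)
    (hlow : ∀ x ∈ S, ∀ r : ℝ, 0 < r → r ≤ Metric.diam S →
      ENNReal.ofReal (Cμ⁻¹ * r ^ δ) ≤ μ (closedBall x r))
    (m n : ℕ) (hm : 0 < m) (τ : ℝ)
    (hτ1 : entropyNumber S m < τ) (hτ2 : τ ≤ entropyNumber S m + Metric.diam S) :
    (Measure.pi fun _ : Fin n => μ)
        {ω : Fin n → EuclideanSpace ℝ (Fin d) | ∃ s ∈ S, ∀ i, τ < dist (ω i) s}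
      ≤ ENNReal.ofReal
          ((m : ℝ) * Real.exp (-(Cμ⁻¹ * (τ - entropyNumber S m) ^ δ * n))) := by
  rcases S.eq_empty_or_nonempty with rfl | hne
  · simp
  have hbdd : Bornology.IsBounded S := by
    by_contra h
    rw [diam_eq_zero_of_unbounded h] at hτ2
    linarith
  have hcont : ContinuousAt
      (fun η : ℝ => ENNReal.ofReal (m * Real.exp (-(Cμ⁻¹ * (τ - η) ^ δ * n))))
      (entropyNumber S m) := by
    have hbase : τ - entropyNumber S m ≠ 0 := by linarith
    fun_prop (disch := exact Or.inl hbase)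
  refine le_of_forall_Ioo_le_of_continuousWithinAt (f := fun η => ENNReal.ofReal
    (m * Real.exp (-(Cμ⁻¹ * (τ - η) ^ δ * n)))) hτ1 (fun η hη => ?_) hcont.continuousWithinAt
  obtain ⟨x, hxS, hcov⟩ := exists_cover_of_entropyNumber_lt hm hne hbdd hη.1
  have := measure_exists_far_from_sample_le (ι := Fin n) (τ := τ) μ hcov
    fun j => hlow _ (hxS j) _ (by linarith [hη.2]) (by linarith [hη.1])
  rwa [Fintype.card_fin, Fintype.card_fin] at this

/-- If `μ` is a probability measure with support `S` satisfying `μ(B_r(x)) ≥ C_μ⁻¹ r^δ` for all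
`x ∈ S` and `0 < r ≤ diam S`, then for `ε_m(S) < τ ≤ ε_m(S) + diam S` the probability that an
i.i.d. sample `x_1, …, x_n` satisfies `sup_{x ∈ S} min_i ‖x_i − x‖ > τ` is at most
`m · exp(−C_μ⁻¹ (τ − ε_m(S))^δ n)`. -/
theorem covering_by_sample {d : ℕ} (μ : Measure (EuclideanSpace ℝ (Fin d)))
    [IsProbabilityMeasure μ]
    (S : Set (EuclideanSpace ℝ (Fin d))) (hS : S = measureSupport μ)
    (Cμ δ : ℝ) (hC : 1 ≤ Cμ) (hδ : 0 < δ)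
    (hlow : ∀ x ∈ S, ∀ r : ℝ, 0 < r → r ≤ Metric.diam S →
      ENNReal.ofReal (Cμ⁻¹ * r ^ δ) ≤ μ (closedBall x r))
    (m n : ℕ) (hm : 0 < m) (τ : ℝ)
    (hτ1 : entropyNumber S m < τ) (hτ2 : τ ≤ entropyNumber S m + Metric.diam S) :
    (Measure.pi fun _ : Fin n => μ)
        {ω : Fin n → EuclideanSpace ℝ (Fin d) | ∃ s ∈ S, ∀ i, τ < dist (ω i) s}
      ≤ ENNReal.ofReal
          ((m : ℝ) * Real.exp (-(Cμ⁻¹ * (τ - entropyNumber S m) ^ δ * n))) :=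
  covering_by_sample_general μ S Cμ δ hlow m n hm τ hτ1 hτ2
end

section
/- Let X be a set partitioned into measurable cells A_1,…,A_m, and for each j let H_j be an RKHS on A_j with kernel k_j and λ_j > 0. Suppose for some constants a_1,…,a_m > 0 and q > 0 the dyadic entropy numbers satisfy e_i(id : H_j → ℓ_∞(A_j ∩ S)) ≤ a_j i^{−1/q} for all i ∈ ℕ and j, for some S ⊆ X. Let H be the localized RKHS of functions f with f|_{A_j} ∈ H_j and ‖f‖_H² = Σ_j λ_j ‖f|_{A_j}‖²_{H_j}. Then e_i(id : H → ℓ_∞(S)) ≤ (3 log 4)^{1/q} (Σ_{j=1}^m (a_j/√λ_j)^q)^{1/q} · i^{−1/q} for all i ∈ ℕ. -/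
/-- The `i`-th dyadic entropy number (in the sup-norm over `S`) of a class `F` of real-valued
functions on `X`: the infimum over `ε > 0` such that `F` can be covered by `2^(i-1)` balls of
radius `ε` in `ℓ_∞(S)`. -/
noncomputable def funEntropy {X : Type*} (S : Set X) (F : Set (X → ℝ)) (i : ℕ) : ℝ :=
  sInf {ε : ℝ | 0 < ε ∧ ∃ φ : Fin (2 ^ (i - 1)) → (X → ℝ),
    ∀ f ∈ F, ∃ c, ∀ x ∈ S, |f x - φ c x| ≤ ε}

/-!
Fix a radius `r` above the claimed bound and put `n_j = ⌊(a_j / (√λ_j r))^q⌋ + 1`. The hypothesis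
covers the unit ball of `H_j`, evaluated on `A_j ∩ S`, by `2^(n_j - 1)` balls of radius `√λ_j r`;
since `f|_{A_j}` lies in `λ_j^{-1/2}` times that unit ball, gluing the centres along the partition
covers the unit ball of `H` by `∏_j 2^(n_j - 1)` balls of radius `r`. This is at most `2^(i-1)`
because `∑_j (n_j - 1) ≤ ∑_j (a_j / (√λ_j r))^q < i / (3 log 4) < i`.

An infimum over an empty set of radii is `0`, so covers whose existence the hypothesis does not
guarantee are produced by hand: a cover of the unit ball of `H` at level `i` restricts to a finite
cover of each cell, and a finite cover of the image of a unit ball under a linear map bounds it.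
-/

open Pointwise

section

variable {X ι : Type*}

def CoversWith (D : Set X) (F : Set (X → ℝ)) (N : ℕ) (ε : ℝ) : Prop :=
  ∃ φ : Fin N → X → ℝ, ∀ f ∈ F, ∃ c, ∀ x ∈ D, |f x - φ c x| ≤ ε

namespace CoversWith

variable {D : Set X} {F : Set (X → ℝ)} {N : ℕ} {ε : ℝ}

theorem mono_radius (h : CoversWith D F N ε) {ε' : ℝ} (hε : ε ≤ ε') : CoversWith D F N ε' := by
  obtain ⟨φ, hφ⟩ := h
  exact ⟨φ, fun f hf => (hφ f hf).imp fun c hc x hx => (hc x hx).trans hε⟩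

theorem mono_card (h : CoversWith D F N ε) {M : ℕ} (hNM : N ≤ M) : CoversWith D F M ε := by
  obtain ⟨φ, hφ⟩ := h
  refine ⟨fun c => if hc : (c : ℕ) < N then φ ⟨c, hc⟩ else 0, fun f hf => ?_⟩
  obtain ⟨c, hc⟩ := hφ f hf
  exact ⟨Fin.castLE hNM c, by simpa using hc⟩

theorem of_eqOn (h : CoversWith D F N ε) {D' : Set X} {F' : Set (X → ℝ)} (hD : D' ⊆ D)
    (hF : ∀ f' ∈ F', ∃ f ∈ F, Set.EqOn f f' D') : CoversWith D' F' N ε := by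
  obtain ⟨φ, hφ⟩ := h
  refine ⟨φ, fun f' hf' => ?_⟩
  obtain ⟨f, hf, hff'⟩ := hF f' hf'
  obtain ⟨c, hc⟩ := hφ f hf
  exact ⟨c, fun x hx => hff' hx ▸ hc x (hD hx)⟩

theorem mono_set (h : CoversWith D F N ε) {F' : Set (X → ℝ)} (hF : F' ⊆ F) :
    CoversWith D F' N ε :=
  h.of_eqOn subset_rfl fun f hf => ⟨f, hF hf, Set.eqOn_refl f D⟩

theorem smul (h : CoversWith D F N ε) (a : ℝ) : CoversWith D (a • F) N (|a| * ε) := by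
  obtain ⟨φ, hφ⟩ := h
  refine ⟨fun c => a • φ c, ?_⟩
  rintro _ ⟨f, hf, rfl⟩
  obtain ⟨c, hc⟩ := hφ f hf
  refine ⟨c, fun x hx => ?_⟩
  simp only [Pi.smul_apply, smul_eq_mul, ← mul_sub, abs_mul]
  exact mul_le_mul_of_nonneg_left (hc x hx) (abs_nonneg a)

theorem of_abs_le {r : ℝ} (hF : ∀ f ∈ F, ∀ x ∈ D, |f x| ≤ r) (hN : 0 < N) :
    CoversWith D F N r :=
  ⟨fun _ => 0, fun f hf => ⟨⟨0, hN⟩, by simpa using hF f hf⟩⟩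

theorem card_pos (h : CoversWith D F N ε) (hF : F.Nonempty) : 0 < N := by
  obtain ⟨φ, hφ⟩ := h
  obtain ⟨f, hf⟩ := hF
  exact (hφ f hf).choose.pos

/-- Two of the `N + 1` points `(k / N) • f`, `k ≤ N`, share a ball; they are `|f| / N` apart. -/
theorem abs_le_of_smul_mem (h : CoversWith D F N ε) {f : X → ℝ}
    (hf : ∀ t ∈ Set.Icc (0 : ℝ) 1, t • f ∈ F) {x : X} (hx : x ∈ D) : |f x| ≤ 2 * N * ε := by
  have hN : (0 : ℝ) < N := by
    exact_mod_cast h.card_pos ⟨_, hf 1 ⟨zero_le_one, le_rfl⟩⟩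
  obtain ⟨φ, hφ⟩ := h
  have ht : ∀ k : Fin (N + 1), ((k : ℝ) / N) ∈ Set.Icc (0 : ℝ) 1 := fun k =>
    ⟨by positivity, div_le_one_of_le₀ (by exact_mod_cast Nat.lt_succ_iff.mp k.isLt) hN.le⟩
  choose κ hκ using fun k : Fin (N + 1) => hφ _ (hf _ (ht k))
  obtain ⟨k, k', hne, hkk'⟩ := Fintype.exists_ne_map_eq_of_card_lt κ (by simp)
  have hk := hκ k x hx
  have hk' := hκ k' x hx
  rw [hkk'] at hk
  simp only [Pi.smul_apply, smul_eq_mul] at hk hk'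
  have hsep : (1 : ℝ) ≤ |(k : ℝ) - k'| := by
    rcases Nat.lt_or_gt_of_ne (Fin.val_ne_of_ne hne) with hlt | hlt
    · rw [abs_sub_comm, le_abs]; left; linarith [show (k : ℝ) + 1 ≤ k' by exact_mod_cast hlt]
    · rw [le_abs]; left; linarith [show (k' : ℝ) + 1 ≤ k by exact_mod_cast hlt]
  calc |f x| ≤ |(k : ℝ) - k'| * |f x| := le_mul_of_one_le_left (abs_nonneg _) hsep
    _ = N * |(k / N * f x - φ (κ k') x) - (k' / N * f x - φ (κ k') x)| := by
      rw [← abs_mul, ← abs_of_pos hN, ← abs_mul, abs_of_pos hN]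
      congr 1
      field_simp
      ring
    _ ≤ N * (ε + ε) := by gcongr; exact (abs_sub _ _).trans (add_le_add hk hk')
    _ = 2 * N * ε := by ring

end CoversWith

section Glue

variable [Fintype ι] {P : ι → Set X}

noncomputable def glue (P : ι → Set X) (g : ι → X → ℝ) : X → ℝ :=
  fun x => ∑ j, (P j).indicator (g j) x

theorem glue_apply_of_mem (hP : ∀ x, ∃! j, x ∈ P j) (g : ι → X → ℝ) {x : X} {j : ι}
    (hx : x ∈ P j) : glue P g x = g j x := by
  rw [glue, Finset.sum_eq_single_of_mem j (Finset.mem_univ j) fun j' _ hj' =>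
    Set.indicator_of_notMem (fun hxj' => hj' ((hP x).unique hxj' hx)) _]
  exact Set.indicator_of_mem hx _

theorem CoversWith.glued (hP : ∀ x, ∃! j, x ∈ P j) {S : Set X} {F : ι → Set (X → ℝ)}
    {N : ι → ℕ} {ε : ℝ} (h : ∀ j, CoversWith (P j ∩ S) (F j) (N j) ε) :
    CoversWith S {f | ∃ g : ι → X → ℝ, (∀ j, g j ∈ F j) ∧ f = glue P g} (∏ j, N j) ε := by
  classical
  choose φ hφ using h
  let e : (∀ j, Fin (N j)) ≃ Fin (∏ j, N j) := Fintype.equivFinOfCardEq (by simp)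
  refine ⟨fun c => glue P fun j => φ j (e.symm c j), ?_⟩
  rintro _ ⟨g, hg, rfl⟩
  choose c hc using fun j => hφ j (g j) (hg j)
  refine ⟨e c, fun x hx => ?_⟩
  obtain ⟨j, hj, -⟩ := hP x
  simp only [glue_apply_of_mem hP _ hj, e.symm_apply_apply]
  exact hc j x ⟨hj, hx⟩

end Glue

theorem mul_rpow_neg_one_div_lt {a r q n : ℝ} (ha : 0 ≤ a) (hr : 0 < r) (hq : 0 < q)
    (h : (a / r) ^ q < n) : a * n ^ (-(1 / q)) < r := by
  have hn : 0 < n := (Real.rpow_nonneg (div_nonneg ha hr.le) q).trans_lt h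
  have h' : a / r < n ^ q⁻¹ := (Real.lt_rpow_inv_iff_of_pos (div_nonneg ha hr.le) hn.le hq).2 h
  rw [Real.rpow_neg hn.le, one_div, ← div_eq_mul_inv, div_lt_iff₀ (by positivity)]
  rwa [div_lt_iff₀ hr, mul_comm] at h'

section Entropy

variable {D : Set X} {F : Set (X → ℝ)} {n : ℕ}

theorem funEntropy_eq_zero_of_forall_not_coversWith
    (h : ∀ ε, 0 < ε → ¬CoversWith D F (2 ^ (n - 1)) ε) : funEntropy D F n = 0 := by
  have hempty : {ε | 0 < ε ∧ CoversWith D F (2 ^ (n - 1)) ε} = ∅ :=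
    Set.eq_empty_iff_forall_notMem.2 fun ε hε => h ε hε.1 hε.2
  exact (congrArg sInf hempty).trans Real.sInf_empty

theorem coversWith_of_funEntropy_lt (hF : ∃ ε, 0 < ε ∧ CoversWith D F (2 ^ (n - 1)) ε) {r : ℝ}
    (hr : funEntropy D F n < r) : CoversWith D F (2 ^ (n - 1)) r := by
  obtain ⟨_, ⟨-, hε⟩, hεr⟩ := (csInf_lt_iff ⟨0, fun _ hε => hε.1.le⟩ hF).1 hr
  exact hε.mono_radius hεr.le

theorem funEntropy_le_of_forall_lt {T : ℝ} (hT : 0 ≤ T)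
    (h : ∀ r, T < r → CoversWith D F (2 ^ (n - 1)) r) : funEntropy D F n ≤ T :=
  le_of_forall_gt_imp_ge_of_dense fun r hr =>
    csInf_le ⟨0, fun _ hε => hε.1.le⟩ ⟨hT.trans_lt hr, h r hr⟩

theorem coversWith_inv_smul_of_funEntropy_le (hF : ∃ ε, 0 < ε ∧ CoversWith D F (2 ^ (n - 1)) ε)
    {a q s r : ℝ} (hn : funEntropy D F n ≤ a * (n : ℝ) ^ (-(1 / q))) (ha : 0 ≤ a) (hq : 0 < q)
    (hs : 0 < s) (hr : 0 < r) (h : (a / s / r) ^ q < n) :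
    CoversWith D (s⁻¹ • F) (2 ^ (n - 1)) r := by
  have hlt : a * (n : ℝ) ^ (-(1 / q)) < s * r :=
    mul_rpow_neg_one_div_lt ha (mul_pos hs hr) hq (by rwa [← div_div])
  simpa [abs_of_pos hs, hs.ne'] using
    (coversWith_of_funEntropy_lt hF (hn.trans_lt hlt)).smul s⁻¹

end Entropy

section UnitBall

variable {E : Type*} [SeminormedAddCommGroup E] [NormedSpace ℝ E]

def unitBallImage (ev : E → X → ℝ) : Set (X → ℝ) := {f | ∃ g : E, ‖g‖ ≤ 1 ∧ f = ev g}

variable {ev : E → X → ℝ}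

theorem smul_mem_unitBallImage (hlin : IsLinearMap ℝ ev) {f : X → ℝ} (hf : f ∈ unitBallImage ev)
    {t : ℝ} (ht : t ∈ Set.Icc (0 : ℝ) 1) : t • f ∈ unitBallImage ev := by
  obtain ⟨g, hg, rfl⟩ := hf
  refine ⟨t • g, ?_, (hlin.map_smul t g).symm⟩
  rw [norm_smul, Real.norm_of_nonneg ht.1]
  exact mul_le_one₀ ht.2 (norm_nonneg g) hg

/-- A finite cover of the image of the unit ball bounds it, so one ball suffices. -/
theorem CoversWith.exists_radius_unitBallImage {D : Set X} {N : ℕ} {ε : ℝ} (hlin : IsLinearMap ℝ ev)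
    (hε : 0 < ε) (h : CoversWith D (unitBallImage ev) N ε) {M : ℕ} (hM : 0 < M) :
    ∃ r, 0 < r ∧ CoversWith D (unitBallImage ev) M r := by
  have hN : 0 < N := h.card_pos ⟨ev 0, 0, by simp, rfl⟩
  exact ⟨2 * N * ε, by positivity, .of_abs_le (fun f hf x hx =>
    h.abs_le_of_smul_mem (fun t ht => smul_mem_unitBallImage hlin hf ht) hx) hM⟩

end UnitBall

section Localized

variable [Fintype ι] {H : ι → Type*} [∀ j, SeminormedAddCommGroup (H j)]
  [∀ j, NormedSpace ℝ (H j)]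

def localizedUnitBall (P : ι → Set X) (lam : ι → ℝ) (ev : ∀ j, H j → X → ℝ) : Set (X → ℝ) :=
  {f | ∃ g : ∀ j, H j, (∑ j, lam j * ‖g j‖ ^ 2) ≤ 1 ∧ f = glue P fun j => ev j (g j)}

variable {P : ι → Set X} {lam : ι → ℝ} {ev : ∀ j, H j → X → ℝ}

theorem localizedUnitBall_subset (hlam : ∀ j, 0 < lam j) (hlin : ∀ j, IsLinearMap ℝ (ev j)) :
    localizedUnitBall P lam ev ⊆
      {f | ∃ g : ι → X → ℝ, (∀ j, g j ∈ (√(lam j))⁻¹ • unitBallImage (ev j)) ∧ f = glue P g} := by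
  rintro _ ⟨g, hg, rfl⟩
  refine ⟨fun j => ev j (g j), fun j => ⟨ev j (√(lam j) • g j), ⟨_, ?_, rfl⟩, ?_⟩, rfl⟩
  · have hterm : lam j * ‖g j‖ ^ 2 ≤ 1 := (Finset.single_le_sum
      (fun j _ => mul_nonneg (hlam j).le (sq_nonneg ‖g j‖)) (Finset.mem_univ j)).trans hg
    rw [norm_smul, Real.norm_of_nonneg (Real.sqrt_nonneg _), ← pow_le_one_iff_of_nonneg
      (by positivity) two_ne_zero, mul_pow, Real.sq_sqrt (hlam j).le]
    exact hterm
  · dsimp only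
    rw [(hlin j).map_smul, smul_smul, inv_mul_cancel₀ (Real.sqrt_pos.2 (hlam j)).ne', one_smul]

theorem CoversWith.unitBallImage_of_localizedUnitBall (hP : ∀ x, ∃! j, x ∈ P j)
    (hlam : ∀ j, 0 < lam j) (hlin : ∀ j, IsLinearMap ℝ (ev j)) {S : Set X} {N : ℕ} {ε : ℝ}
    (h : CoversWith S (localizedUnitBall P lam ev) N ε) (j : ι) :
    CoversWith (P j ∩ S) (unitBallImage (ev j)) N (√(lam j) * ε) := by
  classical
  have hs : 0 < √(lam j) := Real.sqrt_pos.2 (hlam j)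
  have hscaled : CoversWith (P j ∩ S) ((√(lam j))⁻¹ • unitBallImage (ev j)) N ε := by
    refine h.of_eqOn Set.inter_subset_right ?_
    rintro _ ⟨_, ⟨g, hg, rfl⟩, rfl⟩
    refine ⟨_, ⟨Pi.single j ((√(lam j))⁻¹ • g), ?_, rfl⟩, fun x hx => ?_⟩
    · rw [Finset.sum_eq_single_of_mem j (Finset.mem_univ j) fun j' _ hj' => by simp [hj']]
      rw [Pi.single_eq_same, norm_smul, mul_pow, norm_inv, Real.norm_of_nonneg hs.le, inv_pow,
        Real.sq_sqrt (hlam j).le, ← mul_assoc, mul_inv_cancel₀ (hlam j).ne', one_mul]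
      exact pow_le_one₀ (norm_nonneg g) hg
    · rw [glue_apply_of_mem hP _ hx.1, Pi.single_eq_same, (hlin j).map_smul]
  simpa [smul_smul, abs_of_pos hs, hs.ne'] using hscaled.smul √(lam j)

end Localized

theorem sum_div_rpow_lt [Fintype ι] {b : ι → ℝ} (hb : ∀ j, 0 ≤ b j) {q c : ℝ} (hq : 0 < q)
    (hc : 1 ≤ c) {i : ℕ} (hi : 0 < i) {r : ℝ}
    (hr : c ^ (1 / q) * (∑ j, b j ^ q) ^ (1 / q) * (i : ℝ) ^ (-(1 / q)) < r) :
    ∑ j, (b j / r) ^ q < i := by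
  set B := ∑ j, b j ^ q
  have hB : 0 ≤ B := Finset.sum_nonneg fun j _ => Real.rpow_nonneg (hb j) q
  have hi' : (0 : ℝ) < i := by exact_mod_cast hi
  have hr0 : 0 < r := lt_of_le_of_lt (by positivity) hr
  have hroot : c ^ (1 / q) * B ^ (1 / q) * (i : ℝ) ^ (-(1 / q)) = (c * B / i) ^ q⁻¹ := by
    rw [Real.rpow_neg hi'.le, ← Real.inv_rpow hi'.le, ← Real.mul_rpow (by positivity) hB,
      ← Real.mul_rpow (by positivity) (by positivity), one_div, div_eq_mul_inv]
  rw [hroot, Real.rpow_inv_lt_iff_of_pos (by positivity) hr0.le hq, div_lt_iff₀ hi'] at hr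
  calc ∑ j, (b j / r) ^ q = B / r ^ q := by
        simp_rw [Real.div_rpow (hb _) hr0.le, ← Finset.sum_div, B]
    _ < i := by rw [div_lt_iff₀ (by positivity)]; nlinarith

theorem sum_floor_lt [Fintype ι] {u : ι → ℝ} (hu : ∀ j, 0 ≤ u j) {n : ℕ} (h : ∑ j, u j < n) :
    ∑ j, ⌊u j⌋₊ < n := by
  have : ((∑ j, ⌊u j⌋₊ : ℕ) : ℝ) ≤ ∑ j, u j := by
    push_cast
    exact Finset.sum_le_sum fun j _ => Nat.floor_le (hu j)
  exact_mod_cast this.trans_lt h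

theorem one_le_three_mul_log_four : 1 ≤ 3 * Real.log 4 := by
  have := Real.one_sub_inv_le_log_of_pos (by norm_num : (0 : ℝ) < 4)
  norm_num at this
  linarith

end

/-- Entropy bound for the localized RKHS `H` with `‖f‖_H² = ∑_j λ_j ‖f|_{A_j}‖²_{H_j}`:
if `e_i(id : H_j → ℓ_∞(A_j ∩ S)) ≤ a_j i^{-1/q}` for all `i` and `j`, then
`e_i(id : H → ℓ_∞(S)) ≤ (3 log 4)^{1/q} (∑_j (a_j/√λ_j)^q)^{1/q} i^{-1/q}` for all `i`.
Each `H_j` is a Hilbert space of functions on the cell `A_j`, given via a linear evaluation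
`ev j : H j → (X → ℝ)`; the unit ball of `H` corresponds to families `g` with
`∑_j λ_j ‖g_j‖² ≤ 1`, glued via indicators along the partition. -/
theorem localized_entropy_bound {X : Type*} (m : ℕ)
    (P : Fin m → Set X) (hP : ∀ x : X, ∃! j, x ∈ P j) (S : Set X)
    (lam : Fin m → ℝ) (hlam : ∀ j, 0 < lam j)
    (H : Fin m → Type*) [∀ j, NormedAddCommGroup (H j)] [∀ j, InnerProductSpace ℝ (H j)]
    (ev : ∀ j, H j → X → ℝ) (hlin : ∀ j, IsLinearMap ℝ (ev j))
    (a : Fin m → ℝ) (ha : ∀ j, 0 < a j) (q : ℝ) (hq : 0 < q)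
    (hcell : ∀ (j) (i : ℕ), 0 < i →
      funEntropy (P j ∩ S) {f | ∃ g : H j, ‖g‖ ≤ 1 ∧ f = ev j g} i
        ≤ a j * (i : ℝ) ^ (-(1 / q))) :
    ∀ i : ℕ, 0 < i →
      funEntropy S
          {f | ∃ g : ∀ j, H j, (∑ j, lam j * ‖g j‖ ^ 2) ≤ 1 ∧
            f = fun x => ∑ j, (P j).indicator (ev j (g j)) x} i
        ≤ (3 * Real.log 4) ^ (1 / q) * (∑ j, (a j / Real.sqrt (lam j)) ^ q) ^ (1 / q)
            * (i : ℝ) ^ (-(1 / q)) := by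
  intro i hi
  have hb (j : Fin m) : 0 ≤ a j / √(lam j) := div_nonneg (ha j).le (Real.sqrt_nonneg _)
  have hT : 0 ≤ (3 * Real.log 4) ^ (1 / q) * (∑ j, (a j / √(lam j)) ^ q) ^ (1 / q)
      * (i : ℝ) ^ (-(1 / q)) :=
    mul_nonneg (mul_nonneg (Real.rpow_nonneg (zero_le_one.trans one_le_three_mul_log_four) _)
      (Real.rpow_nonneg (Finset.sum_nonneg fun j _ => Real.rpow_nonneg (hb j) q) _))
      (Real.rpow_nonneg (Nat.cast_nonneg i) _)
  by_cases hcov : ∃ ε, 0 < ε ∧ CoversWith S (localizedUnitBall P lam ev) (2 ^ (i - 1)) ε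
  swap
  · push Not at hcov
    exact (funEntropy_eq_zero_of_forall_not_coversWith hcov).trans_le hT
  obtain ⟨ε, hε, hcov⟩ := hcov
  have hcells (j : Fin m) (n : ℕ) :
      ∃ r, 0 < r ∧ CoversWith (P j ∩ S) (unitBallImage (ev j)) (2 ^ (n - 1)) r :=
    (hcov.unitBallImage_of_localizedUnitBall hP hlam hlin j).exists_radius_unitBallImage (hlin j)
      (mul_pos (Real.sqrt_pos.2 (hlam j)) hε) (by positivity)
  refine funEntropy_le_of_forall_lt hT fun r hr => ?_
  have hr0 : 0 < r := hT.trans_lt hr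
  set u := fun j => (a j / √(lam j) / r) ^ q
  have hu : ∑ j, ⌊u j⌋₊ < i :=
    sum_floor_lt (fun j => Real.rpow_nonneg (div_nonneg (hb j) hr0.le) q)
      (sum_div_rpow_lt hb hq one_le_three_mul_log_four hi hr)
  have hpieces (j : Fin m) :
      CoversWith (P j ∩ S) ((√(lam j))⁻¹ • unitBallImage (ev j)) (2 ^ (⌊u j⌋₊ + 1 - 1)) r :=
    coversWith_inv_smul_of_funEntropy_le (hcells j _) (hcell j _ (Nat.succ_pos _)) (ha j).le hq
      (Real.sqrt_pos.2 (hlam j)) hr0 (by push_cast; exact Nat.lt_floor_add_one _)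
  have hcard : ∏ j, 2 ^ (⌊u j⌋₊ + 1 - 1) ≤ 2 ^ (i - 1) := by
    rw [Finset.prod_pow_eq_pow_sum]
    simp only [Nat.add_sub_cancel]
    exact Nat.pow_le_pow_right two_pos (by omega)
  exact ((CoversWith.glued hP hpieces).mono_card hcard).mono_set
    (localizedUnitBall_subset hlam hlin)
end
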